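/- Let U, V, W₁, W₂, Y₁, Y₂ be random variables on a common probability space taking values in finite sets, satisfying the seven equalities: I(U;Y₁|W₁) = I(U;Y₁|(V,W₁)); I(V;Y₂|W₂) = I(V;Y₂|(U,W₂)); I(U;V|(W₁,W₂,Y₁)) = I(U;V|(W₁,W₂,Y₂)); I(W₂;Y₁|W₁) = I(W₁;Y₂|W₂); I(W₂;Y₁|(U,W₁)) = I(W₁;Y₂|(U,W₂)); I(W₂;Y₁|(V,W₁)) = I(W₁;Y₂|(V,W₂)); and I(W₂;Y₁|(U,V,W₁)) = I(W₁;Y₂|(U,V,W₂)). Set W = (W₁,W₂). Then for any real numbers R₁, R₂ with R₁ ≤ I(U;Y₁|W₁) and R₂ ≤ I(V;Y₂|W₂), the following hold: R₁ ≤ I((U,W);Y₁); R₂ ≤ I((V,W);Y₂); R₁ + R₂ ≤ min{I(W;Y₁), I(W;Y₂)} + I(U;Y₁|W) + I(V;Y₂|(U,W)); and R₁ + R₂ ≤ min{I(W;Y₁), I(W;Y₂)} + I(U;Y₁|(V,W)) + I(V;Y₂|W). -/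

import Mathlib

open MeasureTheory Real

/-- Shannon entropy (in nats) of a random variable taking values in a finite set. -/
noncomputable def entropy {Ω : Type*} [MeasurableSpace Ω] (μ : Measure Ω)
    {S : Type*} [Fintype S] (X : Ω → S) : ℝ :=
  ∑ x : S, Real.negMulLog (μ (X ⁻¹' {x})).toReal

/-- Mutual information `I(X;Y) = H(X) + H(Y) - H(X,Y)`. -/
noncomputable def mutualInfo {Ω : Type*} [MeasurableSpace Ω] (μ : Measure Ω)
    {S T : Type*} [Fintype S] [Fintype T] (X : Ω → S) (Y : Ω → T) : ℝ :=
  entropy μ X + entropy μ Y - entropy μ (fun ω => (X ω, Y ω))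

/-- Conditional mutual information `I(X;Y|Z) = H(X,Z) + H(Y,Z) - H(X,Y,Z) - H(Z)`. -/
noncomputable def condMutualInfo {Ω : Type*} [MeasurableSpace Ω] (μ : Measure Ω)
    {S T R : Type*} [Fintype S] [Fintype T] [Fintype R]
    (X : Ω → S) (Y : Ω → T) (Z : Ω → R) : ℝ :=
  entropy μ (fun ω => (X ω, Z ω)) + entropy μ (fun ω => (Y ω, Z ω))
    - entropy μ (fun ω => (X ω, Y ω, Z ω)) - entropy μ Z

/-!
Everything follows from Shannon-type identities and the nonnegativity of (conditional) mutual
information. The key identity is the exchange rule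
`I(X;Z|C) + I(D;Z|X,C) = I(D;Z|C) + I(X;Z|D,C)`, both sides being `I((X,D);Z|C)`.
Applied to `I(U;Y₁|W₁)` with `D = W₂` and to `I(V;Y₂|U,W₂)` with `D = W₁`, the hypotheses make
`I(W₂;Y₁|U,W₁)` and `I(W₁;Y₂|U,W₂)` cancel, and what is left over besides the target terms is
`I(W₂;Y₁|W₁) = I(W₁;Y₂|W₂)`, which by the chain rule is at most both `I(W;Y₁)` and `I(W;Y₂)`.
The fourth bound is the mirror image, and the first two drop a nonnegative term.
Nonnegativity of `I(X;Y|Z)` is the log-sum inequality `q log (q r / (a b)) ≥ q - a b / r`,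
summed over each fibre of `Z`.
-/

lemma sub_mul_div_le_mul_log {q a b r : ℝ} (hq : 0 ≤ q) (hqa : q ≤ a) (hqb : q ≤ b)
    (hqr : q ≤ r) : q - a * b / r ≤ q * (log q + log r - log a - log b) := by
  rcases hq.eq_or_lt with rfl | hq
  · have : 0 ≤ a * b / r := by positivity
    simpa
  have ha : 0 < a := hq.trans_le hqa
  have hb : 0 < b := hq.trans_le hqb
  have hr : 0 < r := hq.trans_le hqr
  have hlog := mul_le_mul_of_nonneg_left
    (log_le_sub_one_of_pos (by positivity : 0 < a * b / (q * r))) hq.le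
  rw [log_div (by positivity) (by positivity), log_mul ha.ne' hb.ne', log_mul hq.ne' hr.ne']
    at hlog
  have : q * (a * b / (q * r) - 1) = a * b / r - q := by field_simp
  linarith

theorem sum_negMulLog_add_negMulLog_sum_le {S T : Type*} [Fintype S] [Fintype T]
    (q : S → T → ℝ) (hq : ∀ x y, 0 ≤ q x y) :
    ∑ x, ∑ y, negMulLog (q x y) + negMulLog (∑ x, ∑ y, q x y)
      ≤ ∑ x, negMulLog (∑ y, q x y) + ∑ y, negMulLog (∑ x, q x y) := by
  set a : S → ℝ := fun x => ∑ y, q x y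
  set b : T → ℝ := fun y => ∑ x, q x y
  set r : ℝ := ∑ x, ∑ y, q x y
  have hqa : ∀ x y, q x y ≤ a x := fun x y =>
    Finset.single_le_sum (fun y _ => hq x y) (Finset.mem_univ y)
  have hqb : ∀ x y, q x y ≤ b y := fun x y =>
    Finset.single_le_sum (fun x _ => hq x y) (Finset.mem_univ x)
  have hqr : ∀ x y, q x y ≤ r := fun x y => (hqa x y).trans <|
    Finset.single_le_sum (f := a) (fun x _ => Finset.sum_nonneg fun y _ => hq x y)
      (Finset.mem_univ x)
  have hb_sum : ∑ y, b y = r := Finset.sum_comm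
  have mass : ∑ x, ∑ y, a x * b y / r = r := by
    simp only [← Finset.sum_div, ← Finset.mul_sum, ← Finset.sum_mul, hb_sum]
    exact mul_self_div_self r
  have hA : ∑ x, negMulLog (a x) = -∑ x, ∑ y, q x y * log (a x) := by
    simp [negMulLog, a, Finset.sum_mul]
  have hB : ∑ y, negMulLog (b y) = -∑ x, ∑ y, q x y * log (b y) := by
    rw [Finset.sum_comm]
    simp [negMulLog, b, Finset.sum_mul]
  have hQ : ∑ x, ∑ y, negMulLog (q x y) = -∑ x, ∑ y, q x y * log (q x y) := by
    simp [negMulLog]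
  have hR : negMulLog r = -∑ x, ∑ y, q x y * log r := by
    simp [negMulLog, r, Finset.sum_mul]
  have termwise := Finset.sum_le_sum fun x (_ : x ∈ Finset.univ) => Finset.sum_le_sum
    fun y (_ : y ∈ Finset.univ) => sub_mul_div_le_mul_log (hq x y) (hqa x y) (hqb x y) (hqr x y)
  simp only [mul_add, mul_sub, Finset.sum_add_distrib, Finset.sum_sub_distrib] at termwise
  rw [mass] at termwise
  linarith

section Entropy

variable {Ω : Type*} [MeasurableSpace Ω] (μ : Measure Ω)
  {S T R : Type*} [Fintype S] [Fintype T] [Fintype R]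

lemma entropy_eq_of_injective {X : Ω → S} {Y : Ω → T} (f : S → T) (hf : f.Injective)
    (hY : ∀ ω, Y ω = f (X ω)) : entropy μ Y = entropy μ X := by
  classical
  obtain rfl : Y = fun ω => f (X ω) := funext hY
  have fiber_empty : ∀ t ∉ Finset.univ.image f, (fun ω => f (X ω)) ⁻¹' {t} = ∅ := by
    intro t ht
    ext ω
    simpa using fun h => ht (Finset.mem_image.mpr ⟨X ω, Finset.mem_univ _, h⟩)
  unfold entropy
  rw [← Finset.sum_subset (Finset.subset_univ _) fun t _ ht => by simp [fiber_empty t ht],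
    Finset.sum_image fun a _ b _ h => hf h]
  congr! 4 with s
  ext ω
  simp [hf.eq_iff]

lemma measureReal_eq_sum_inter_preimage [IsFiniteMeasure μ] [MeasurableSpace S]
    [MeasurableSingletonClass S] {X : Ω → S} (hX : Measurable X) (s : Set Ω) :
    μ.real s = ∑ x, μ.real (s ∩ X ⁻¹' {x}) := by
  rw [← measureReal_restrict_apply_univ, ← Set.preimage_univ (f := X), ← Finset.coe_univ,
    ← sum_measureReal_preimage_singleton _ fun x _ => hX (measurableSet_singleton x)]
  simp [measureReal_restrict_apply (hX (measurableSet_singleton _)), Set.inter_comm]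

theorem condMutualInfo_nonneg [IsFiniteMeasure μ] [MeasurableSpace S]
    [MeasurableSingletonClass S] [MeasurableSpace T] [MeasurableSingletonClass T] {X : Ω → S}
    {Y : Ω → T} (hX : Measurable X) (hY : Measurable Y) (Z : Ω → R) :
    0 ≤ condMutualInfo μ X Y Z := by
  set q : R → S → T → ℝ := fun z x y => μ.real (X ⁻¹' {x} ∩ (Y ⁻¹' {y} ∩ Z ⁻¹' {z}))
  have sum_y : ∀ z x, ∑ y, q z x y = μ.real (X ⁻¹' {x} ∩ Z ⁻¹' {z}) := fun z x => by
    rw [measureReal_eq_sum_inter_preimage μ hY]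
    congr! 2 with y
    ext ω
    simp only [Set.mem_inter_iff]
    tauto
  have sum_x : ∀ z y, ∑ x, q z x y = μ.real (Y ⁻¹' {y} ∩ Z ⁻¹' {z}) := fun z y => by
    rw [measureReal_eq_sum_inter_preimage μ hX]
    simp only [q, Set.inter_comm]
  have sum_xy : ∀ z, ∑ x, ∑ y, q z x y = μ.real (Z ⁻¹' {z}) := fun z => by
    rw [measureReal_eq_sum_inter_preimage μ hX]
    simp only [sum_y, Set.inter_comm]
  have hXYZ : entropy μ (fun ω => (X ω, Y ω, Z ω)) = ∑ z, ∑ x, ∑ y, negMulLog (q z x y) := by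
    simp only [entropy, Fintype.sum_prod_type, ← Set.singleton_prod_singleton,
      Set.mk_preimage_prod, ← measureReal_def, q]
    exact Finset.sum_comm_cycle
  have hXZ : entropy μ (fun ω => (X ω, Z ω)) = ∑ z, ∑ x, negMulLog (∑ y, q z x y) := by
    simp only [entropy, Fintype.sum_prod_type, ← Set.singleton_prod_singleton,
      Set.mk_preimage_prod, ← measureReal_def, sum_y]
    exact Finset.sum_comm
  have hYZ : entropy μ (fun ω => (Y ω, Z ω)) = ∑ z, ∑ y, negMulLog (∑ x, q z x y) := by
    simp only [entropy, Fintype.sum_prod_type, ← Set.singleton_prod_singleton,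
      Set.mk_preimage_prod, ← measureReal_def, sum_x]
    exact Finset.sum_comm
  have hZ : entropy μ Z = ∑ z, negMulLog (∑ x, ∑ y, q z x y) := by
    simp only [entropy, ← measureReal_def, sum_xy]
  rw [condMutualInfo, hXZ, hYZ, hXYZ, hZ, ← Finset.sum_add_distrib, ← Finset.sum_sub_distrib,
    ← Finset.sum_sub_distrib]
  refine Finset.sum_nonneg fun z _ => ?_
  have := sum_negMulLog_add_negMulLog_sum_le (q z) fun x y => measureReal_nonneg
  linarith

lemma condMutualInfo_comp_right_of_injective (X : Ω → S) (Y : Ω → T) (Z : Ω → R) {P : Type*}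
    [Fintype P] {f : R → P} (hf : f.Injective) :
    condMutualInfo μ X Y (fun ω => f (Z ω)) = condMutualInfo μ X Y Z := by
  have h₁ : entropy μ (fun ω => (X ω, f (Z ω))) = entropy μ (fun ω => (X ω, Z ω)) :=
    entropy_eq_of_injective μ (fun p => (p.1, f p.2))
      (fun p p' h => by simp_all [Prod.ext_iff, hf.eq_iff]) fun _ => rfl
  have h₂ : entropy μ (fun ω => (Y ω, f (Z ω))) = entropy μ (fun ω => (Y ω, Z ω)) :=
    entropy_eq_of_injective μ (fun p => (p.1, f p.2))
      (fun p p' h => by simp_all [Prod.ext_iff, hf.eq_iff]) fun _ => rfl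
  have h₃ : entropy μ (fun ω => (X ω, Y ω, f (Z ω))) = entropy μ (fun ω => (X ω, Y ω, Z ω)) :=
    entropy_eq_of_injective μ (fun p => (p.1, p.2.1, f p.2.2))
      (fun p p' h => by simp_all [Prod.ext_iff, hf.eq_iff]) fun _ => rfl
  rw [condMutualInfo, condMutualInfo, h₁, h₂, h₃, entropy_eq_of_injective μ f hf fun _ => rfl]

lemma mutualInfo_prod_left (X : Ω → S) (C : Ω → R) (Z : Ω → T) :
    mutualInfo μ (fun ω => (X ω, C ω)) Z = mutualInfo μ C Z + condMutualInfo μ X Z C := by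
  have h₁ : entropy μ (fun ω => (C ω, Z ω)) = entropy μ (fun ω => (Z ω, C ω)) :=
    entropy_eq_of_injective μ Prod.swap Prod.swap_injective fun _ => rfl
  have h₂ : entropy μ (fun ω => ((X ω, C ω), Z ω)) = entropy μ (fun ω => (X ω, Z ω, C ω)) :=
    entropy_eq_of_injective μ (fun p => ((p.1, p.2.2), p.2.1))
      (fun p p' h => by simp_all [Prod.ext_iff]) fun _ => rfl
  rw [mutualInfo, mutualInfo, condMutualInfo, h₁, h₂]
  ring

lemma mutualInfo_prod_right (C : Ω → R) (X : Ω → S) (Z : Ω → T) :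
    mutualInfo μ (fun ω => (C ω, X ω)) Z = mutualInfo μ C Z + condMutualInfo μ X Z C := by
  have h₁ : entropy μ (fun ω => (C ω, X ω)) = entropy μ (fun ω => (X ω, C ω)) :=
    entropy_eq_of_injective μ Prod.swap Prod.swap_injective fun _ => rfl
  have h₂ : entropy μ (fun ω => (C ω, Z ω)) = entropy μ (fun ω => (Z ω, C ω)) :=
    entropy_eq_of_injective μ Prod.swap Prod.swap_injective fun _ => rfl
  have h₃ : entropy μ (fun ω => ((C ω, X ω), Z ω)) = entropy μ (fun ω => (X ω, Z ω, C ω)) :=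
    entropy_eq_of_injective μ (fun p => ((p.2.2, p.1), p.2.1))
      (fun p p' h => by simp_all [Prod.ext_iff]) fun _ => rfl
  rw [mutualInfo, mutualInfo, condMutualInfo, h₁, h₂, h₃]
  ring

theorem mutualInfo_nonneg [IsProbabilityMeasure μ] [MeasurableSpace S]
    [MeasurableSingletonClass S] [MeasurableSpace T] [MeasurableSingletonClass T] {X : Ω → S}
    {Y : Ω → T} (hX : Measurable X) (hY : Measurable Y) : 0 ≤ mutualInfo μ X Y := by
  have h₀ : entropy μ (fun _ => ()) = 0 := by simp [entropy]
  have h₁ : entropy μ (fun ω => (X ω, ())) = entropy μ X :=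
    entropy_eq_of_injective μ (fun x => (x, ())) (Prod.mk_left_injective ()) fun _ => rfl
  have h₂ : entropy μ (fun ω => (Y ω, ())) = entropy μ Y :=
    entropy_eq_of_injective μ (fun y => (y, ())) (Prod.mk_left_injective ()) fun _ => rfl
  have h₃ : entropy μ (fun ω => (X ω, Y ω, ())) = entropy μ (fun ω => (X ω, Y ω)) :=
    entropy_eq_of_injective μ (fun p => (p.1, p.2, ()))
      (fun p p' h => by simp_all [Prod.ext_iff]) fun _ => rfl
  have := condMutualInfo_nonneg μ hX hY fun _ => ()
  rw [condMutualInfo, h₀, h₁, h₂, h₃] at this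
  simpa [mutualInfo] using this

lemma condMutualInfo_add_condMutualInfo_swap (X : Ω → S) (Z : Ω → T) (C : Ω → R) {Q : Type*}
    [Fintype Q] (D : Ω → Q) {P : Type*} [Fintype P] {C' : Ω → P} {f : Q × R → P}
    (hf : f.Injective) (hC' : ∀ ω, C' ω = f (D ω, C ω)) :
    condMutualInfo μ X Z C + condMutualInfo μ D Z (fun ω => (X ω, C ω))
      = condMutualInfo μ D Z C + condMutualInfo μ X Z C' := by
  have h₁ : entropy μ (fun ω => (Z ω, X ω, C ω)) = entropy μ (fun ω => (X ω, Z ω, C ω)) :=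
    entropy_eq_of_injective μ (fun p => (p.2.1, p.1, p.2.2))
      (fun p p' h => by simp_all [Prod.ext_iff]) fun _ => rfl
  have h₂ : entropy μ (fun ω => (Z ω, D ω, C ω)) = entropy μ (fun ω => (D ω, Z ω, C ω)) :=
    entropy_eq_of_injective μ (fun p => (p.2.1, p.1, p.2.2))
      (fun p p' h => by simp_all [Prod.ext_iff]) fun _ => rfl
  have h₃ : entropy μ (fun ω => (D ω, X ω, C ω)) = entropy μ (fun ω => (X ω, D ω, C ω)) :=
    entropy_eq_of_injective μ (fun p => (p.2.1, p.1, p.2.2))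
      (fun p p' h => by simp_all [Prod.ext_iff]) fun _ => rfl
  have h₄ : entropy μ (fun ω => (D ω, Z ω, X ω, C ω))
      = entropy μ (fun ω => (X ω, Z ω, D ω, C ω)) :=
    entropy_eq_of_injective μ (fun p => (p.2.2.1, p.2.1, p.1, p.2.2.2))
      (fun p p' h => by simp_all [Prod.ext_iff]) fun _ => rfl
  rw [funext hC', condMutualInfo_comp_right_of_injective μ X Z _ hf]
  simp only [condMutualInfo]
  rw [h₁, h₂, h₃, h₄]
  ring

end Entropy

theorem stmt_5_general
    {Ω : Type*} [MeasurableSpace Ω] (μ : Measure Ω) [IsProbabilityMeasure μ]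
    {SU SV SW₁ SW₂ SY₁ SY₂ : Type*}
    [Fintype SU] [Fintype SV] [Fintype SW₁] [MeasurableSpace SW₁] [MeasurableSingletonClass SW₁] [Fintype SW₂] [MeasurableSpace SW₂] [MeasurableSingletonClass SW₂] [Fintype SY₁] [MeasurableSpace SY₁] [MeasurableSingletonClass SY₁] [Fintype SY₂] [MeasurableSpace SY₂] [MeasurableSingletonClass SY₂]
    (U : Ω → SU) (V : Ω → SV) (W₁ : Ω → SW₁) (W₂ : Ω → SW₂) (Y₁ : Ω → SY₁) (Y₂ : Ω → SY₂)
    (hW₁ : Measurable W₁) (hW₂ : Measurable W₂) (hY₁ : Measurable Y₁) (hY₂ : Measurable Y₂)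
    (R₁ R₂ : ℝ)
    (h0 : condMutualInfo μ U Y₁ W₁ = condMutualInfo μ U Y₁ (fun ω => (V ω, W₁ ω)))
    (h1 : condMutualInfo μ V Y₂ W₂ = condMutualInfo μ V Y₂ (fun ω => (U ω, W₂ ω)))
    (h3 : condMutualInfo μ W₂ Y₁ W₁ = condMutualInfo μ W₁ Y₂ W₂)
    (h4 : condMutualInfo μ W₂ Y₁ (fun ω => (U ω, W₁ ω)) = condMutualInfo μ W₁ Y₂ (fun ω => (U ω, W₂ ω)))
    (h5 : condMutualInfo μ W₂ Y₁ (fun ω => (V ω, W₁ ω)) = condMutualInfo μ W₁ Y₂ (fun ω => (V ω, W₂ ω)))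
    (h7 : R₁ ≤ condMutualInfo μ U Y₁ W₁)
    (h8 : R₂ ≤ condMutualInfo μ V Y₂ W₂)
    : R₁ ≤ mutualInfo μ (fun ω => (U ω, W₁ ω, W₂ ω)) Y₁ ∧ R₂ ≤ mutualInfo μ (fun ω => (V ω, W₁ ω, W₂ ω)) Y₂ ∧ R₁ + R₂ ≤ min (mutualInfo μ (fun ω => (W₁ ω, W₂ ω)) Y₁) (mutualInfo μ (fun ω => (W₁ ω, W₂ ω)) Y₂) + condMutualInfo μ U Y₁ (fun ω => (W₁ ω, W₂ ω)) + condMutualInfo μ V Y₂ (fun ω => (U ω, W₁ ω, W₂ ω)) ∧ R₁ + R₂ ≤ min (mutualInfo μ (fun ω => (W₁ ω, W₂ ω)) Y₁) (mutualInfo μ (fun ω => (W₁ ω, W₂ ω)) Y₂) + condMutualInfo μ U Y₁ (fun ω => (V ω, W₁ ω, W₂ ω)) + condMutualInfo μ V Y₂ (fun ω => (W₁ ω, W₂ ω)) := by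
  have hK₁ : condMutualInfo μ W₂ Y₁ W₁ ≤ mutualInfo μ (fun ω => (W₁ ω, W₂ ω)) Y₁ := by
    rw [mutualInfo_prod_right]
    exact le_add_of_nonneg_left (mutualInfo_nonneg μ hW₁ hY₁)
  have hK₂ : condMutualInfo μ W₂ Y₁ W₁ ≤ mutualInfo μ (fun ω => (W₁ ω, W₂ ω)) Y₂ := by
    rw [mutualInfo_prod_left, ← h3]
    exact le_add_of_nonneg_left (mutualInfo_nonneg μ hW₂ hY₂)
  have exchange₁ := condMutualInfo_add_condMutualInfo_swap μ U Y₁ W₁ W₂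
    (C' := fun ω => (W₁ ω, W₂ ω)) Prod.swap_injective fun _ => rfl
  have exchange₂ := condMutualInfo_add_condMutualInfo_swap μ V Y₂ W₂ W₁
    (C' := fun ω => (W₁ ω, W₂ ω)) Function.injective_id fun _ => rfl
  have exchangeV₁ := condMutualInfo_add_condMutualInfo_swap μ U Y₁ (fun ω => (V ω, W₁ ω)) W₂
    (C' := fun ω => (V ω, W₁ ω, W₂ ω)) (f := fun p => (p.2.1, p.2.2, p.1))
    (fun p p' h => by simp_all [Prod.ext_iff]) fun _ => rfl
  have exchangeU₂ := condMutualInfo_add_condMutualInfo_swap μ V Y₂ (fun ω => (U ω, W₂ ω)) W₁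
    (C' := fun ω => (U ω, W₁ ω, W₂ ω)) (f := fun p => (p.2.1, p.1, p.2.2))
    (fun p p' h => by simp_all [Prod.ext_iff]) fun _ => rfl
  have chain₁ := mutualInfo_prod_left μ U (fun ω => (W₁ ω, W₂ ω)) Y₁
  have chain₂ := mutualInfo_prod_left μ V (fun ω => (W₁ ω, W₂ ω)) Y₂
  refine ⟨?_, ?_, ?_, ?_⟩
  · linarith [condMutualInfo_nonneg μ hW₂ hY₁ fun ω => (U ω, W₁ ω)]
  · linarith [condMutualInfo_nonneg μ hW₁ hY₂ fun ω => (V ω, W₂ ω)]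
  · linarith [le_min hK₁ hK₂, condMutualInfo_nonneg μ hW₁ hY₂ fun ω => (V ω, U ω, W₂ ω)]
  · linarith [le_min hK₁ hK₂, condMutualInfo_nonneg μ hW₂ hY₁ fun ω => (U ω, V ω, W₁ ω)]

theorem stmt_5
    {Ω : Type*} [MeasurableSpace Ω] (μ : Measure Ω) [IsProbabilityMeasure μ]
    {SU SV SW₁ SW₂ SY₁ SY₂ : Type*}
    [Fintype SU] [MeasurableSpace SU] [MeasurableSingletonClass SU] [Fintype SV] [MeasurableSpace SV] [MeasurableSingletonClass SV] [Fintype SW₁] [MeasurableSpace SW₁] [MeasurableSingletonClass SW₁] [Fintype SW₂] [MeasurableSpace SW₂] [MeasurableSingletonClass SW₂] [Fintype SY₁] [MeasurableSpace SY₁] [MeasurableSingletonClass SY₁] [Fintype SY₂] [MeasurableSpace SY₂] [MeasurableSingletonClass SY₂]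
    (U : Ω → SU) (V : Ω → SV) (W₁ : Ω → SW₁) (W₂ : Ω → SW₂) (Y₁ : Ω → SY₁) (Y₂ : Ω → SY₂)
    (hU : Measurable U) (hV : Measurable V) (hW₁ : Measurable W₁) (hW₂ : Measurable W₂) (hY₁ : Measurable Y₁) (hY₂ : Measurable Y₂)
    (R₁ R₂ : ℝ)
    (h0 : condMutualInfo μ U Y₁ W₁ = condMutualInfo μ U Y₁ (fun ω => (V ω, W₁ ω)))
    (h1 : condMutualInfo μ V Y₂ W₂ = condMutualInfo μ V Y₂ (fun ω => (U ω, W₂ ω)))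
    (h2 : condMutualInfo μ U V (fun ω => (W₁ ω, W₂ ω, Y₁ ω)) = condMutualInfo μ U V (fun ω => (W₁ ω, W₂ ω, Y₂ ω)))
    (h3 : condMutualInfo μ W₂ Y₁ W₁ = condMutualInfo μ W₁ Y₂ W₂)
    (h4 : condMutualInfo μ W₂ Y₁ (fun ω => (U ω, W₁ ω)) = condMutualInfo μ W₁ Y₂ (fun ω => (U ω, W₂ ω)))
    (h5 : condMutualInfo μ W₂ Y₁ (fun ω => (V ω, W₁ ω)) = condMutualInfo μ W₁ Y₂ (fun ω => (V ω, W₂ ω)))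
    (h6 : condMutualInfo μ W₂ Y₁ (fun ω => (U ω, V ω, W₁ ω)) = condMutualInfo μ W₁ Y₂ (fun ω => (U ω, V ω, W₂ ω)))
    (h7 : R₁ ≤ condMutualInfo μ U Y₁ W₁)
    (h8 : R₂ ≤ condMutualInfo μ V Y₂ W₂)
    : R₁ ≤ mutualInfo μ (fun ω => (U ω, W₁ ω, W₂ ω)) Y₁ ∧ R₂ ≤ mutualInfo μ (fun ω => (V ω, W₁ ω, W₂ ω)) Y₂ ∧ R₁ + R₂ ≤ min (mutualInfo μ (fun ω => (W₁ ω, W₂ ω)) Y₁) (mutualInfo μ (fun ω => (W₁ ω, W₂ ω)) Y₂) + condMutualInfo μ U Y₁ (fun ω => (W₁ ω, W₂ ω)) + condMutualInfo μ V Y₂ (fun ω => (U ω, W₁ ω, W₂ ω)) ∧ R₁ + R₂ ≤ min (mutualInfo μ (fun ω => (W₁ ω, W₂ ω)) Y₁) (mutualInfo μ (fun ω => (W₁ ω, W₂ ω)) Y₂) + condMutualInfo μ U Y₁ (fun ω => (V ω, W₁ ω, W₂ ω)) + condMutualInfo μ V Y₂ (fun ω => (W₁ ω, W₂ ω)) 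:=
  stmt_5_general μ U V W₁ W₂ Y₁ Y₂ hW₁ hW₂ hY₁ hY₂ R₁ R₂ h0 h1 h3 h4 h5 h7 h8
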